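/- Let (S,·,⁻¹) be an inverse semigroup containing, as an ideal, a copy of the Brandt semigroup B_{G,I} over a group G with nonempty index set I, where the zero of B_{G,I} is a zero element of S. Then for every idempotent f of S and every nonzero element d of B_{G,I}, the product fd equals either d or the zero, and the product df equals either d or the zero. -/

import Mathlib

universe u v

/-- An inverse semigroup: every element has a unique (generalized) inverse. -/
class InverseSemigroup (S : Type*) extends Semigroup S, Inv S where
  mul_inv_mul : ∀ x : S, x * x⁻¹ * x = x
  inv_mul_inv : ∀ x : S, x⁻¹ * x * x⁻¹ = x⁻¹
  inv_unique : ∀ x y : S, x * y * x = x → y * x * y = y → y = x⁻¹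

/-- Carrier of the Brandt semigroup `B_{G,I}`: `none` is the zero element. -/
def Brandt (I G : Type*) : Type _ := Option (I × G × I)

open Classical in
/-- Multiplication of the Brandt semigroup `B_{G,I}`. -/
noncomputable def bmul {I G : Type*} [Mul G] : Brandt I G → Brandt I G → Brandt I G
  | some (l1, g1, r1), some (l2, g2, r2) => if r1 = l2 then some (l1, g1 * g2, r2) else none
  | _, _ => none

/-
Idempotents of an inverse semigroup multiply to idempotents, so multiplying a local identity
`(l, 1, l)` or `(r, 1, r)` of `d = (l, g, r)` by the idempotent `f` gives an idempotent of the
ideal `B_{G,I}`, i.e. `0` or some `(i, 1, i)`. Hence `f d = (f (l, 1, l)) d` and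
`d f = d ((r, 1, r) f)` are products in `B_{G,I}` of `d` with `0` or with some `(i, 1, i)`,
and such a product is `d` or `0`.
-/

namespace InverseSemigroup

variable {S : Type*} [InverseSemigroup S]

theorem inv_eq_self_of_isIdempotentElem {e : S} (he : IsIdempotentElem e) : e⁻¹ = e :=
  (inv_unique e e (by rw [he.eq, he.eq]) (by rw [he.eq, he.eq])).symm

theorem inv_inv (x : S) : x⁻¹⁻¹ = x :=
  (inv_unique x⁻¹ x (inv_mul_inv x) (mul_inv_mul x)).symm

theorem isIdempotentElem_mul {e f : S} (he : IsIdempotentElem e) (hf : IsIdempotentElem f) :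
    IsIdempotentElem (e * f) := by
  set b := (e * f)⁻¹
  have he' (x : S) : e * (e * x) = e * x := by rw [← mul_assoc, he.eq]
  have hf' (x : S) : f * (f * x) = f * x := by rw [← mul_assoc, hf.eq]
  have hb' (x : S) : b * (e * (f * (b * x))) = b * x := by
    simpa only [mul_assoc] using congrArg (· * x) (inv_mul_inv (e * f))
  have hfbe_idem : f * b * e * (f * b * e) = f * b * e := by simp only [mul_assoc, hb']
  -- `f b e` is an inverse of `e f`, hence equal to `b`.
  have hfbe : f * b * e = b := by
    refine inv_unique (e * f) (f * b * e) ?_ ?_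
    · simpa only [mul_assoc, he', hf'] using mul_inv_mul (e * f)
    · simp only [mul_assoc, he', hf', hb']
  have hb : IsIdempotentElem b := by rw [IsIdempotentElem, ← hfbe]; exact hfbe_idem
  rw [← inv_inv (e * f), inv_eq_self_of_isIdempotentElem hb]
  exact hb

end InverseSemigroup

namespace Brandt

variable {I G : Type*}

theorem bmul_none_left [Mul G] (y : Brandt I G) : bmul none y = none := by
  cases y <;> rfl

theorem bmul_none_right [Mul G] (x : Brandt I G) : bmul x none = none := by
  rcases x with _ | ⟨_, _, _⟩ <;> rfl

open Classical in
theorem bmul_some_some [Mul G] (l₁ r₁ l₂ r₂ : I) (g₁ g₂ : G) :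
    bmul (some (l₁, g₁, r₁) : Brandt I G) (some (l₂, g₂, r₂)) =
      if r₁ = l₂ then some (l₁, g₁ * g₂, r₂) else none :=
  rfl

theorem eq_none_or_eq_some_one_of_bmul_self [Group G] {y : Brandt I G} (hy : bmul y y = y) :
    y = none ∨ ∃ i, y = some (i, 1, i) := by
  rcases y with _ | ⟨i, h, j⟩
  · exact .inl rfl
  by_cases hji : j = i
  · subst hji
    rw [bmul_some_some, if_pos rfl] at hy
    have h1 : h = 1 := by simpa using Option.some.inj hy
    exact .inr ⟨j, by rw [h1]⟩
  · rw [bmul_some_some, if_neg hji] at hy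
    exact .inl hy.symm

theorem bmul_eq_self_or_none_of_bmul_self_left [Group G] {y : Brandt I G} (hy : bmul y y = y)
    (d : Brandt I G) : bmul y d = d ∨ bmul y d = none := by
  rcases eq_none_or_eq_some_one_of_bmul_self hy with rfl | ⟨i, rfl⟩
  · exact .inr (bmul_none_left d)
  rcases d with _ | ⟨l, g, r⟩
  · exact .inr rfl
  by_cases hil : i = l
  · subst hil
    exact .inl (by rw [bmul_some_some, if_pos rfl, one_mul])
  · exact .inr (by rw [bmul_some_some, if_neg hil])

theorem bmul_eq_self_or_none_of_bmul_self_right [Group G] {y : Brandt I G} (hy : bmul y y = y)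
    (d : Brandt I G) : bmul d y = d ∨ bmul d y = none := by
  rcases eq_none_or_eq_some_one_of_bmul_self hy with rfl | ⟨i, rfl⟩
  · exact .inr (bmul_none_right d)
  rcases d with _ | ⟨l, g, r⟩
  · exact .inr rfl
  by_cases hri : r = i
  · subst hri
    exact .inl (by rw [bmul_some_some, if_pos rfl, mul_one])
  · exact .inr (by rw [bmul_some_some, if_neg hri])

theorem exists_bmul_self_and_bmul_left_eq [MulOneClass G] (d : Brandt I G) :
    ∃ e, bmul e e = e ∧ bmul e d = d := by
  rcases d with _ | ⟨l, g, r⟩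
  · exact ⟨none, rfl, rfl⟩
  · exact ⟨some (l, 1, l), by rw [bmul_some_some, if_pos rfl, one_mul],
      by rw [bmul_some_some, if_pos rfl, one_mul]⟩

theorem exists_bmul_self_and_bmul_right_eq [MulOneClass G] (d : Brandt I G) :
    ∃ e, bmul e e = e ∧ bmul d e = d := by
  rcases d with _ | ⟨l, g, r⟩
  · exact ⟨none, rfl, rfl⟩
  · exact ⟨some (r, 1, r), by rw [bmul_some_some, if_pos rfl, one_mul],
      by rw [bmul_some_some, if_pos rfl, mul_one]⟩

end Brandt

section BrandtIdeal

open InverseSemigroup Brandt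

variable {S I G : Type*} [InverseSemigroup S] {φ : Brandt I G → S}

theorem exists_bmul_self_eq_mul_left [Mul G] (hinj : Function.Injective φ)
    (hhom : ∀ a b : Brandt I G, φ (bmul a b) = φ a * φ b)
    (hideal : ∀ s : S, ∀ x : Brandt I G, φ x * s ∈ Set.range φ ∧ s * φ x ∈ Set.range φ)
    {f : S} (hf : IsIdempotentElem f) {e : Brandt I G} (he : bmul e e = e) :
    ∃ y, bmul y y = y ∧ φ y = f * φ e := by
  obtain ⟨y, hy⟩ := (hideal f e).2
  have hφe : IsIdempotentElem (φ e) := by rw [IsIdempotentElem, ← hhom, he]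
  exact ⟨y, hinj (by rw [hhom, hy]; exact isIdempotentElem_mul hf hφe), hy⟩

theorem exists_bmul_self_eq_mul_right [Mul G] (hinj : Function.Injective φ)
    (hhom : ∀ a b : Brandt I G, φ (bmul a b) = φ a * φ b)
    (hideal : ∀ s : S, ∀ x : Brandt I G, φ x * s ∈ Set.range φ ∧ s * φ x ∈ Set.range φ)
    {f : S} (hf : IsIdempotentElem f) {e : Brandt I G} (he : bmul e e = e) :
    ∃ y, bmul y y = y ∧ φ y = φ e * f := by
  obtain ⟨y, hy⟩ := (hideal f e).1
  have hφe : IsIdempotentElem (φ e) := by rw [IsIdempotentElem, ← hhom, he]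
  exact ⟨y, hinj (by rw [hhom, hy]; exact isIdempotentElem_mul hφe hf), hy⟩

theorem idempotent_mul_eq_self_or_zero [Group G] (hinj : Function.Injective φ)
    (hhom : ∀ a b : Brandt I G, φ (bmul a b) = φ a * φ b)
    (hideal : ∀ s : S, ∀ x : Brandt I G, φ x * s ∈ Set.range φ ∧ s * φ x ∈ Set.range φ)
    {f : S} (hf : IsIdempotentElem f) (d : Brandt I G) :
    f * φ d = φ d ∨ f * φ d = φ none := by
  obtain ⟨e, he, hed⟩ := exists_bmul_self_and_bmul_left_eq d
  obtain ⟨y, hy, hφy⟩ := exists_bmul_self_eq_mul_left hinj hhom hideal hf he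
  have hfd : f * φ d = φ (bmul y d) := by
    calc f * φ d = f * φ e * φ d := by rw [mul_assoc, ← hhom, hed]
      _ = φ (bmul y d) := by rw [hhom, hφy]
  rw [hfd]
  exact (bmul_eq_self_or_none_of_bmul_self_left hy d).imp (congrArg φ) (congrArg φ)

theorem mul_idempotent_eq_self_or_zero [Group G] (hinj : Function.Injective φ)
    (hhom : ∀ a b : Brandt I G, φ (bmul a b) = φ a * φ b)
    (hideal : ∀ s : S, ∀ x : Brandt I G, φ x * s ∈ Set.range φ ∧ s * φ x ∈ Set.range φ)
    {f : S} (hf : IsIdempotentElem f) (d : Brandt I G) :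
    φ d * f = φ d ∨ φ d * f = φ none := by
  obtain ⟨e, he, hde⟩ := exists_bmul_self_and_bmul_right_eq d
  obtain ⟨y, hy, hφy⟩ := exists_bmul_self_eq_mul_right hinj hhom hideal hf he
  have hdf : φ d * f = φ (bmul d y) := by
    calc φ d * f = φ d * (φ e * f) := by rw [← mul_assoc, ← hhom, hde]
      _ = φ (bmul d y) := by rw [hhom, hφy]
  rw [hdf]
  exact (bmul_eq_self_or_none_of_bmul_self_right hy d).imp (congrArg φ) (congrArg φ)

end BrandtIdeal

theorem idempotent_mul_brandt_element {S : Type u} [InverseSemigroup S]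
    {I : Type v} {G : Type v} [Group G]
    (φ : Brandt I G → S) (hinj : Function.Injective φ)
    (hhom : ∀ a b : Brandt I G, φ (bmul a b) = φ a * φ b)
    (hideal : ∀ s : S, ∀ x : Brandt I G, φ x * s ∈ Set.range φ ∧ s * φ x ∈ Set.range φ) :
    ∀ f : S, f * f = f → ∀ (l : I) (g : G) (r : I),
      (f * φ (some (l, g, r)) = φ (some (l, g, r)) ∨ f * φ (some (l, g, r)) = φ none) ∧
      (φ (some (l, g, r)) * f = φ (some (l, g, r)) ∨ φ (some (l, g, r)) * f = φ none) :=
  fun _ hf l g r =>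
    ⟨idempotent_mul_eq_self_or_zero hinj hhom hideal hf (some (l, g, r)),
      mul_idempotent_eq_self_or_zero hinj hhom hideal hf (some (l, g, r))⟩
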